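/- arXiv:math/0507523 — 3 statements merged into one kernel-verified Lean document; each statement's English description precedes it below -/
import Mathlib

section
/- Let R be a commutative ring in which 2 is invertible, let E₀ and E₁ be R-modules, and let α : E₁ → E₀ be an R-linear map. Write M^∨ = Hom_R(M, R) for the dual module. Suppose given R-linear maps θ₁ : E₁ → E₀^∨ and θ₀ : E₀ → E₁^∨ forming a chain map from the two-term complex [E₁ →α E₀] to its shifted dual [E₀^∨ →α^∨ E₁^∨], i.e., θ₀(α x)(y) = θ₁(x)(α y) for all x, y ∈ E₁, and suppose given an R-linear map h : E₀ → E₀^∨ which is a homotopy between θ = (θ₁, θ₀) and its shifted dual θ^∨[1] = (θ₀^∨, θ₁^∨), i.e., h(α x)(u) = θ₁(x)(u) − θ₀(u)(x) for all x ∈ E₁, u ∈ E₀, and h(u)(α y) = θ₀(u)(y) − θ₁(y)(u) for all u ∈ E₀, y ∈ E₁. Define λ₁ : E₁ → E₀^∨ by λ₁(x)(u) = ½(θ₁(x)(u) + θ₀(u)(x)) and λ₀ : E₀ → E₁^∨ by λ₀(u)(y) = ½(θ₀(u)(y) + θ₁(y)(u)). Then: (a) (λ₁, λ₀) is a chain map,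 i.e., λ₀(α x)(y) = λ₁(x)(α y) for all x, y ∈ E₁; (b) (λ₁, λ₀) is self-dual, i.e., λ₁(x)(u) = λ₀(u)(x) for all x ∈ E₁, u ∈ E₀; and (c) ½h is a homotopy from (θ₁, θ₀) to (λ₁, λ₀), i.e., ½·h(α x) = θ₁(x) − λ₁(x) for all x ∈ E₁ and ½·h(u)(α y) = θ₀(u)(y) − λ₀(u)(y) for all u ∈ E₀, y ∈ E₁. -/
/-- **Symmetrization of a morphism to the shifted dual (core of Proposition 3.13).**
Given a two-term complex `[E₁ →α E₀]` over a commutative ring `R` with `2` invertible,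
a chain map `θ = (θ₁, θ₀)` to the shifted dual `[E₀^∨ →α^∨ E₁^∨]`, and a homotopy `h`
between `θ` and its shifted dual `θ^∨[1] = (θ₀^∨, θ₁^∨)`, the symmetrizations
`λ₁(x)(u) = ½(θ₁(x)(u) + θ₀(u)(x))` and `λ₀(u)(y) = ½(θ₀(u)(y) + θ₁(y)(u))`
form a self-dual chain map homotopic to `θ` via `½h`. -/
theorem symmetrize_chain_map_to_shifted_dual
    (R : Type) [CommRing R] [Invertible (2 : R)]
    (E₀ E₁ : Type) [AddCommGroup E₀] [Module R E₀] [AddCommGroup E₁] [Module R E₁]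
    (α : E₁ →ₗ[R] E₀)
    (θ₁ : E₁ →ₗ[R] (E₀ →ₗ[R] R)) (θ₀ : E₀ →ₗ[R] (E₁ →ₗ[R] R))
    (hchain : ∀ x y : E₁, θ₀ (α x) y = θ₁ x (α y))
    (h : E₀ →ₗ[R] (E₀ →ₗ[R] R))
    (hhom₁ : ∀ (x : E₁) (u : E₀), h (α x) u = θ₁ x u - θ₀ u x)
    (hhom₀ : ∀ (u : E₀) (y : E₁), h u (α y) = θ₀ u y - θ₁ y u) :
    -- (a) `(λ₁, λ₀)` is a chain map
    (∀ x y : E₁,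
        ⅟(2 : R) * (θ₀ (α x) y + θ₁ y (α x)) = ⅟(2 : R) * (θ₁ x (α y) + θ₀ (α y) x)) ∧
    -- (b) `(λ₁, λ₀)` is self-dual: `λ₁ = λ₀^∨`
    (∀ (x : E₁) (u : E₀),
        ⅟(2 : R) * (θ₁ x u + θ₀ u x) = ⅟(2 : R) * (θ₀ u x + θ₁ x u)) ∧
    -- (c) `½h` is a homotopy from `θ` to `λ`
    (∀ (x : E₁) (u : E₀),
        ⅟(2 : R) * h (α x) u = θ₁ x u - ⅟(2 : R) * (θ₁ x u + θ₀ u x)) ∧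
    (∀ (u : E₀) (y : E₁),
        ⅟(2 : R) * h u (α y) = θ₀ u y - ⅟(2 : R) * (θ₀ u y + θ₁ y u)) := by
  refine ⟨fun x y => by rw [hchain x y, hchain y x], fun x u => by ring, fun x u => ?_, fun u y => ?_⟩
  · rw [hhom₁ x u]; have h2 : ⅟(2:R) * 2 = 1 := invOf_mul_self 2
    linear_combination θ₁ x u * h2
  · rw [hhom₀ u y]; have h2 : ⅟(2:R) * 2 = 1 := invOf_mul_self 2
    linear_combination θ₀ u y * h2
end

section
/- Let A be a commutative ℂ-algebra together with elements x₁, …, xₙ ∈ A such that the Kähler differentials dx₁, …, dxₙ form an A-module basis of Ω_{A/ℂ} (an étale coordinate system). For a ∈ A define ∂ᵢ(a) ∈ A to be the i-th coordinate of da in this basis, so that da = Σᵢ ∂ᵢ(a)·dxᵢ. Let f₁, …, fₙ ∈ A satisfy the almost-closedness condition: for all i, j, the element ∂ⱼ(fᵢ) − ∂ᵢ(fⱼ) lies in the ideal (f₁, …, fₙ) generated by the fᵢ. Let K be a field equipped with a ℂ-algebra structure, let γ : A → K[[t]] be a ℂ-algebra homomorphism, and let m > 0 be an integer such that t^m divides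 γ(fᵢ) for all i (i.e., the coefficient of t^p in γ(fᵢ) vanishes for all p < m and all i). Then the following identity holds in the module of Kähler differentials Ω_{K/ℂ}: Σᵢ (coefficient of t^m in γ(fᵢ)) · d(coefficient of t^0 in γ(xᵢ)) = 0. -/
/-!
Apply to `γ` two derivations of `K⟦t⟧`: the `t`-derivative `∂ₜ`, and the derivation `δ` that applies
`d : K → Ω_{K/ℂ}` coefficientwise (with values in power series over the square-zero extension
`K ⊕ Ω_{K/ℂ}`). Both obey the chain rule `D (γ a) = Σⱼ γ (∂ⱼ a) • D (γ xⱼ)`, hence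
`Σᵢ (∂ₜ γfᵢ • δ γxᵢ - ∂ₜ γxᵢ • δ γfᵢ) = Σᵢⱼ γ (∂ⱼ fᵢ - ∂ᵢ fⱼ) • ∂ₜ γxⱼ • δ γxᵢ`.
By almost-closedness the right side is divisible by `t ^ m`, while the `t ^ (m - 1)`-coefficient of
the left side is `m • Σᵢ Fᵢ⁽ᵐ⁾ • d cᵢ⁽⁰⁾`; as `K` has characteristic zero, the identity follows.
-/

open PowerSeries TrivSqZeroExt

section ChainRule

variable {k A ι : Type*} [CommRing k] [CommRing A] [Algebra k A] [Fintype ι]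

theorem Derivation.eq_sum_basis_repr_smul {M : Type*} [AddCommGroup M] [Module A M] [Module k M]
    [IsScalarTower k A M] (x : ι → A) (b : Module.Basis ι A Ω[A⁄k])
    (hb : ∀ i, b i = KaehlerDifferential.D k A (x i)) (D : Derivation k A M) (a : A) :
    D a = ∑ i, b.repr (KaehlerDifferential.D k A a) i • D (x i) := by
  conv_lhs => rw [← D.liftKaehlerDifferential_comp_D a, ← b.sum_repr (KaehlerDifferential.D k A a)]
  simp only [map_sum, _root_.map_smul, hb, Derivation.liftKaehlerDifferential_comp_D]

theorem Derivation.apply_algHom_eq_sum_basis_repr_smul {R M : Type*} [CommRing R] [Algebra k R]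
    [AddCommGroup M] [Module R M] [Module k M] [IsScalarTower k R M] (x : ι → A)
    (b : Module.Basis ι A Ω[A⁄k]) (hb : ∀ i, b i = KaehlerDifferential.D k A (x i))
    (ψ : A →ₐ[k] R) (D : Derivation k R M) (a : A) :
    D (ψ a) = ∑ i, ψ (b.repr (KaehlerDifferential.D k A a) i) • D (ψ (x i)) := by
  let := ψ.toAlgebra
  have : IsScalarTower k A R := IsScalarTower.of_algebraMap_eq fun c => (ψ.commutes c).symm
  let : Module A M := Module.compHom M (algebraMap A R)
  have : IsScalarTower A R M := ⟨fun a r m => mul_smul (ψ a) r m⟩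
  have : IsScalarTower k A M := ⟨fun c a m => by
    change ψ (c • a) • m = c • ψ a • m
    rw [_root_.map_smul, smul_assoc]⟩
  exact (D.compAlgebraMap A).eq_sum_basis_repr_smul x b hb a

end ChainRule

theorem Finset.sum_smul_sub_smul_eq_sum_sum {R M ι : Type*} [CommRing R] [AddCommGroup M]
    [Module R M] [Fintype ι] (u : ι → ι → R) (v v' : ι → R) (w w' : ι → M)
    (hv : ∀ i, v' i = ∑ j, u i j • v j) (hw : ∀ i, w' i = ∑ j, u i j • w j) :
    ∑ i, (v' i • w i - v i • w' i) = ∑ i, ∑ j, (u i j - u j i) • v j • w i := by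
  simp only [hv, hw, Finset.sum_smul, Finset.smul_sum, sub_smul, Finset.sum_sub_distrib, smul_assoc]
  rw [Finset.sum_comm (f := fun i j => u j i • v j • w i)]
  simp only [smul_comm (v _) (u _ _)]

theorem PowerSeries.coeff_mul_of_X_pow_dvd {R : Type*} [CommSemiring R] {a : R⟦X⟧} {n : ℕ}
    (h : X ^ n ∣ a) (y : R⟦X⟧) : coeff n (a * y) = coeff n a * constantCoeff y := by
  obtain ⟨a, rfl⟩ := h
  have hay := coeff_X_pow_mul (a * y) n 0
  have ha := coeff_X_pow_mul a n 0
  rw [zero_add] at hay ha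
  rw [mul_assoc, hay, ha]
  simp only [coeff_zero_eq_constantCoeff_apply, map_mul]

theorem dvd_apply_of_mem_span_range {A S ι : Type*} [CommRing A] [CommRing S] [Fintype ι]
    (γ : A →+* S) {f : ι → A} {c : S} (hc : ∀ i, c ∣ γ (f i)) {w : A}
    (hw : w ∈ Ideal.span (Set.range f)) : c ∣ γ w := by
  obtain ⟨r, rfl⟩ := Ideal.mem_span_range_iff_exists_fun.mp hw
  simpa only [map_sum, map_mul] using Finset.dvd_sum fun i _ => (hc i).mul_left (γ (r i))

noncomputable def Derivation.ofSquareZeroDiff {k R B : Type*} [CommRing k] [CommRing R]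
    [CommRing B] [Algebra k R] [Algebra k B] [Algebra R B] [IsScalarTower k R B] (φ : R →ₐ[k] B)
    (hφ : ∀ a b, (φ a - algebraMap R B a) * (φ b - algebraMap R B b) = 0) :
    Derivation k R B where
  toFun a := φ a - algebraMap R B a
  map_add' a b := by simp only [map_add]; abel
  map_smul' c a := by simp [smul_sub, Algebra.algebraMap_eq_smul_one, smul_assoc]
  map_one_eq_zero' := by simp
  leibniz' a b := by
    change φ (a * b) - algebraMap R B (a * b) =
      a • (φ b - algebraMap R B b) + b • (φ a - algebraMap R B a)
    simp only [Algebra.smul_def, map_mul]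
    linear_combination hφ a b

instance PowerSeries.isScalarTower_powerSeries {k R A : Type*} [CommSemiring k] [CommSemiring R]
    [CommSemiring A] [Algebra k R] [Algebra k A] [Algebra R A] [IsScalarTower k R A] :
    IsScalarTower k R⟦X⟧ A⟦X⟧ :=
  IsScalarTower.of_algebraMap_eq fun c => by
    simp [PowerSeries.algebraMap_apply, algebraMap_apply'', ← IsScalarTower.algebraMap_apply]

section CoeffwiseDifferential

variable (k K : Type*) [CommRing k] [CommRing K] [Algebra k K]

-- `Ω[K⁄k]` as a symmetric bimodule, so that `TrivSqZeroExt K Ω[K⁄k]` is a commutative `k`-algebra.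
noncomputable local instance : Module Kᵐᵒᵖ Ω[K⁄k] :=
  Module.compHom _ ((RingHom.id K).fromOpposite mul_comm)
local instance : IsCentralScalar K Ω[K⁄k] := ⟨fun _ _ => rfl⟩

namespace KaehlerDifferential

noncomputable def toTrivSqZeroExt : K →ₐ[k] TrivSqZeroExt K Ω[K⁄k] where
  toFun a := inl a + inr (D k K a)
  map_one' := by simp
  map_mul' a c := by ext <;> simp [Derivation.leibniz, op_smul_eq_smul]
  map_zero' := by simp
  map_add' a c := by ext <;> simp
  commutes' c := by ext <;> simp [algebraMap_eq_inl']

theorem coeff_mapAlgHom_toTrivSqZeroExt_sub_algebraMap (g : K⟦X⟧) (p : ℕ) :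
    coeff p (mapAlgHom (toTrivSqZeroExt k K) g - algebraMap K⟦X⟧ _ g) =
      inr (D k K (coeff p g)) := by
  simp [mapAlgHom_apply, algebraMap_apply'', toTrivSqZeroExt, algebraMap_eq_inl]

noncomputable def mapCoeffsPowerSeries : Derivation k K⟦X⟧ (TrivSqZeroExt K Ω[K⁄k])⟦X⟧ :=
  Derivation.ofSquareZeroDiff (mapAlgHom (toTrivSqZeroExt k K)) fun g h => by
    refine PowerSeries.ext fun p => ?_
    simp [coeff_mul, coeff_mapAlgHom_toTrivSqZeroExt_sub_algebraMap]

theorem coeff_mapCoeffsPowerSeries (g : K⟦X⟧) (p : ℕ) :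
    coeff p (mapCoeffsPowerSeries k K g) = inr (D k K (coeff p g)) :=
  coeff_mapAlgHom_toTrivSqZeroExt_sub_algebraMap k K g p

theorem snd_coeff_derivative_smul_mapCoeffsPowerSeries_sub {n : ℕ} {g : K⟦X⟧}
    (hg : X ^ (n + 1) ∣ g) (h : K⟦X⟧) :
    (coeff n (derivative K g • mapCoeffsPowerSeries k K h -
      derivative K h • mapCoeffsPowerSeries k K g)).snd =
      ((n + 1 : K) * coeff (n + 1) g) • D k K (constantCoeff h) := by
  have hδg : X ^ (n + 1) ∣ mapCoeffsPowerSeries k K g := X_pow_dvd_iff.mpr fun p hp => by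
    rw [coeff_mapCoeffsPowerSeries, X_pow_dvd_iff.mp hg p hp, map_zero, inr_zero]
  have hDg : X ^ n ∣ derivative K g := X_pow_dvd_iff.mpr fun p hp => by
    rw [coeff_derivative, X_pow_dvd_iff.mp hg (p + 1) (by omega), zero_mul]
  have hDg' : X ^ n ∣ algebraMap K⟦X⟧ (TrivSqZeroExt K Ω[K⁄k])⟦X⟧ (derivative K g) := by
    simpa [algebraMap_apply''] using map_dvd (algebraMap K⟦X⟧ (TrivSqZeroExt K Ω[K⁄k])⟦X⟧) hDg
  rw [Algebra.smul_def, Algebra.smul_def, map_sub, coeff_mul_of_X_pow_dvd hDg',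
    X_pow_dvd_iff.mp (dvd_mul_of_dvd_right hδg _) n n.lt_succ_self, sub_zero,
    ← coeff_zero_eq_constantCoeff_apply, coeff_mapCoeffsPowerSeries]
  simp [algebraMap_apply'', algebraMap_eq_inl, coeff_derivative, mul_comm]

end KaehlerDifferential

theorem add_one_smul_sum_coeff_smul_D_constantCoeff_eq_zero {A ι : Type*} [CommRing A]
    [Algebra k A] [Fintype ι] (x : ι → A) (b : Module.Basis ι A Ω[A⁄k])
    (hb : ∀ i, b i = KaehlerDifferential.D k A (x i)) (f : ι → A)
    (halmost : ∀ i j, b.repr (KaehlerDifferential.D k A (f i)) j -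
      b.repr (KaehlerDifferential.D k A (f j)) i ∈ Ideal.span (Set.range f))
    (γ : A →ₐ[k] K⟦X⟧) (n : ℕ) (hdiv : ∀ i, X ^ (n + 1) ∣ γ (f i)) :
    (n + 1 : K) • ∑ i, coeff (n + 1) (γ (f i)) •
      KaehlerDifferential.D k K (constantCoeff (γ (x i))) = 0 := by
  set u := fun i j => b.repr (KaehlerDifferential.D k A (f i)) j
  set Dt := (derivative K).restrictScalars k
  set δ := KaehlerDifferential.mapCoeffsPowerSeries k K
  have jacobian := Finset.sum_smul_sub_smul_eq_sum_sum (fun i j => γ (u i j))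
    (fun i => Dt (γ (x i))) (fun i => Dt (γ (f i))) (fun i => δ (γ (x i))) (fun i => δ (γ (f i)))
    (fun i => Dt.apply_algHom_eq_sum_basis_repr_smul x b hb γ (f i))
    (fun i => δ.apply_algHom_eq_sum_basis_repr_smul x b hb γ (f i))
  have hantisymm : ∀ i j, coeff n ((γ (u i j) - γ (u j i)) • Dt (γ (x j)) • δ (γ (x i))) = 0 := by
    intro i j
    have hX : X ^ (n + 1) ∣ γ (u i j - u j i) :=
      dvd_apply_of_mem_span_range γ.toRingHom hdiv (halmost i j)
    rw [← map_sub, Algebra.smul_def]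
    refine X_pow_dvd_iff.mp (dvd_mul_of_dvd_left ?_ _) n n.lt_succ_self
    simpa [algebraMap_apply''] using map_dvd (algebraMap K⟦X⟧ (TrivSqZeroExt K Ω[K⁄k])⟦X⟧) hX
  apply_fun fun y => (coeff n y).snd at jacobian
  simp only [map_sum, snd_sum, hantisymm, snd_zero, Finset.sum_const_zero] at jacobian
  rw [Finset.smul_sum, ← jacobian]
  refine Finset.sum_congr rfl fun i _ => ?_
  rw [← smul_assoc, smul_eq_mul]
  exact (KaehlerDifferential.snd_coeff_derivative_smul_mapCoeffsPowerSeries_sub k K (hdiv i) _).symm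

end CoeffwiseDifferential

/-- **Key identity in the proof of Theorem 4.5 (claim (claim)).**
Let `A` be a `ℂ`-algebra with étale coordinates `x₁, …, xₙ` (so the `d xᵢ` form a basis of
`Ω_{A/ℂ}`), and let `f₁, …, fₙ ∈ A` satisfy the almost-closedness condition
`∂ⱼ fᵢ − ∂ᵢ fⱼ ∈ (f₁, …, fₙ)`.  If `γ : A → K[[t]]` is a `ℂ`-algebra homomorphism to
power series over a field `K` and `m > 0` is such that `t^m ∣ γ(fᵢ)` for all `i`,
then `Σᵢ Fᵢ^{(m)} · d cᵢ^{(0)} = 0` in `Ω_{K/ℂ}`, where `Fᵢ^{(m)}` is the `t^m`-coefficient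
of `γ(fᵢ)` and `cᵢ^{(0)}` the constant coefficient of `γ(xᵢ)`. -/
theorem almost_closed_one_form_key_identity
    (A : Type) [CommRing A] [Algebra ℂ A] (n : ℕ) (x : Fin n → A)
    (b : Module.Basis (Fin n) A (KaehlerDifferential ℂ A))
    (hb : ∀ i, b i = KaehlerDifferential.D ℂ A (x i))
    (f : Fin n → A)
    (halmost : ∀ i j : Fin n,
      b.repr (KaehlerDifferential.D ℂ A (f i)) j - b.repr (KaehlerDifferential.D ℂ A (f j)) i
        ∈ Ideal.span (Set.range f))
    (K : Type) [Field K] [Algebra ℂ K]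
    (γ : A →ₐ[ℂ] PowerSeries K) (m : ℕ) (hm : 0 < m)
    (hdiv : ∀ i : Fin n, ∀ p : ℕ, p < m → PowerSeries.coeff (R := K) p (γ (f i)) = 0) :
    ∑ i : Fin n, PowerSeries.coeff (R := K) m (γ (f i)) •
        KaehlerDifferential.D ℂ K (PowerSeries.constantCoeff (R := K) (γ (x i))) = 0 := by
  obtain ⟨m, rfl⟩ := Nat.exists_eq_add_one_of_ne_zero hm.ne'
  have : CharZero K := charZero_of_injective_algebraMap (algebraMap ℂ K).injective
  have hm : (m + 1 : K) ≠ 0 := by exact_mod_cast m.succ_ne_zero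
  exact (smul_eq_zero.mp (add_one_smul_sum_coeff_smul_D_constantCoeff_eq_zero ℂ K x b hb f
    halmost γ m fun i => X_pow_dvd_iff.mpr (hdiv i))).resolve_left hm
end

section
/- Let A be a commutative ℂ-algebra together with elements x₁, …, xₙ ∈ A such that the Kähler differentials dx₁, …, dxₙ form an A-module basis of Ω_{A/ℂ} (an étale coordinate system). For a ∈ A define ∂ᵢ(a) ∈ A to be the i-th coordinate of da in this basis, so that da = Σᵢ ∂ᵢ(a)·dxᵢ. Let f₁, …, fₙ ∈ A satisfy the almost-closedness condition: for all i, j, the element ∂ⱼ(fᵢ) − ∂ᵢ(fⱼ) lies in the ideal (f₁, …, fₙ) generated by the fᵢ. Let K be a field equipped with a ℂ-algebra structure, let γ : A → K[[t]] be a ℂ-algebra homomorphism, and let m > 0 be an integer such that t^m divides γ(fᵢ) for all i. Then the following identity holds in the second exterior power Λ² Ω_{K/ℂ} of the module of Kähler differentials of K over ℂ: Σᵢ d(coefficient of t^0 in γ(xᵢ)) ∧ d(coefficient of t^m in γ(fᵢ)) = 0. -/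
/-!
Pull the relations `d fᵢ = Σⱼ ∂ⱼfᵢ · d xⱼ` back along `γ` and evaluate the 2-form
`Σᵢ d fᵢ ∧ d xᵢ` on the pair of derivations `(d/dt, δ)` of `K⟦t⟧`, where `δ` is any derivation
of `K` applied coefficientwise. Only the antisymmetric part `∂ⱼfᵢ − ∂ᵢfⱼ ∈ (f)` survives, so the
result is divisible by `t^m`; on the other hand its `t^(m-1)`-coefficient is `m Σᵢ Fᵢ δ(cᵢ)`,
with `Fᵢ` the `t^m`-coefficient of `γ fᵢ` and `cᵢ` the constant coefficient of `γ xᵢ`. As `δ` is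
arbitrary, `Σᵢ Fᵢ dcᵢ = 0` in `Ω_{K/ℂ}`, and the exterior derivative `a db ↦ da ∧ db` turns this
relation into the identity.
-/

open ExteriorAlgebra PowerSeries

noncomputable section
namespace KaehlerDifferential

variable (R S : Type*) [CommRing R] [CommRing S] [Algebra R S]

/-- `Ω × ΛΩ` with the action `a • (ω, η) = (a ω, a η + da ∧ ω)`, twisted so that `a ↦ (da, 0)` is a
derivation; the second component of the induced linear map on `Ω` is the exterior derivative. -/
@[ext]
structure ExteriorDerivModule where
  fst : Ω[S⁄R]
  snd : ExteriorAlgebra S Ω[S⁄R]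

namespace ExteriorDerivModule

variable {R S}

def equivProd : ExteriorDerivModule R S ≃ Ω[S⁄R] × ExteriorAlgebra S Ω[S⁄R] where
  toFun p := (p.fst, p.snd)
  invFun q := ⟨q.1, q.2⟩

instance : AddCommGroup (ExteriorDerivModule R S) := equivProd.addCommGroup

@[simp] theorem fst_add (p q : ExteriorDerivModule R S) : (p + q).fst = p.fst + q.fst := rfl
@[simp] theorem snd_add (p q : ExteriorDerivModule R S) : (p + q).snd = p.snd + q.snd := rfl
@[simp] theorem fst_zero : (0 : ExteriorDerivModule R S).fst = 0 := rfl
@[simp] theorem snd_zero : (0 : ExteriorDerivModule R S).snd = 0 := rfl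

instance : SMul S (ExteriorDerivModule R S) where
  smul a p := ⟨a • p.fst, a • p.snd + ι S (D R S a) * ι S p.fst⟩

@[simp] theorem fst_smul (a : S) (p : ExteriorDerivModule R S) : (a • p).fst = a • p.fst := rfl
@[simp] theorem snd_smul (a : S) (p : ExteriorDerivModule R S) :
    (a • p).snd = a • p.snd + ι S (D R S a) * ι S p.fst := rfl

instance : Module S (ExteriorDerivModule R S) where
  one_smul p := by ext <;> simp
  mul_smul a b p := by
    ext
    · exact mul_smul a b p.fst
    · simp only [snd_smul, fst_smul, Derivation.leibniz, map_add, map_smul, add_mul,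
        smul_mul_assoc, smul_add, mul_smul, mul_smul_comm]
      abel
  smul_zero a := by ext <;> simp
  smul_add a p q := by
    ext
    · exact smul_add a p.fst q.fst
    · simp only [snd_smul, snd_add, fst_add, map_add, smul_add, mul_add]
      abel
  add_smul a b p := by
    ext
    · exact add_smul a b p.fst
    · simp only [snd_smul, snd_add, map_add, add_smul, add_mul]
      abel
  zero_smul p := by ext <;> simp

instance : Module R (ExteriorDerivModule R S) := Module.compHom _ (algebraMap R S)

instance : IsScalarTower R S (ExteriorDerivModule R S) :=
  ⟨fun r a p => by rw [Algebra.smul_def]; exact mul_smul _ _ _⟩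

variable (R S) in
def derivation : Derivation R S (ExteriorDerivModule R S) where
  toFun a := ⟨D R S a, 0⟩
  map_add' a b := by ext <;> simp
  map_smul' r a := by
    ext
    · show D R S (r • a) = algebraMap R S r • D R S a
      rw [Derivation.map_smul, algebraMap_smul]
    · show 0 = algebraMap R S r • 0 + ι S (D R S (algebraMap R S r)) * ι S (D R S a)
      simp
  map_one_eq_zero' := by ext <;> simp
  leibniz' a b := by
    ext
    · exact (D R S).leibniz a b
    · dsimp only [LinearMap.coe_mk, AddHom.coe_mk]
      simp only [snd_add, snd_smul, smul_zero, zero_add]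
      exact (ι_add_mul_swap _ _).symm

end ExteriorDerivModule

def exteriorD : Ω[S⁄R] →+ ExteriorAlgebra S Ω[S⁄R] :=
  .mk' (fun ω => ((ExteriorDerivModule.derivation R S).liftKaehlerDifferential ω).snd) (by simp)

variable {R S}

theorem exteriorD_smul_D (a b : S) :
    exteriorD R S (a • D R S b) = ι S (D R S a) * ι S (D R S b) := by
  simp [exteriorD, ExteriorDerivModule.derivation]

theorem sum_ι_D_mul_ι_D_eq_zero_of_sum_smul_D_eq_zero {κ : Type*} [Fintype κ] {F c : κ → S}
    (h : ∑ i, F i • D R S (c i) = 0) :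
    ∑ i, ι S (D R S (c i)) * ι S (D R S (F i)) = 0 := by
  have h' := congrArg (exteriorD R S) h
  simp only [map_sum, exteriorD_smul_D, map_zero] at h'
  rw [← neg_eq_zero, ← Finset.sum_neg_distrib, ← h']
  exact Finset.sum_congr rfl fun i _ => neg_eq_of_add_eq_zero_left (ι_add_mul_swap _ _)

theorem sum_smul_D_eq_zero_of_forall_derivation {R S : Type*} [CommRing R] [CommRing S]
    [Algebra R S] [Module.Projective S Ω[S⁄R]] {κ : Type*} [Fintype κ] {F c : κ → S}
    (h : ∀ δ : Derivation R S S, ∑ i, F i * δ (c i) = 0) :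
    ∑ i, F i • D R S (c i) = 0 :=
  (Module.forall_dual_apply_eq_zero_iff S _).mp fun l => by
    simpa [map_sum] using h (l.compDer (D R S))

end KaehlerDifferential

namespace Derivation

section MapCoeffs

variable {R K : Type*} [CommSemiring R] [CommSemiring K] [Algebra R K]

def mapCoeffsPowerSeries (δ : Derivation R K K) : Derivation R K⟦X⟧ K⟦X⟧ where
  toFun p := PowerSeries.mk fun n => δ (coeff n p)
  map_add' p q := by ext; simp
  map_smul' r p := by ext; simp
  map_one_eq_zero' := by
    ext n
    simp only [LinearMap.coe_mk, AddHom.coe_mk, coeff_mk, coeff_one]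
    split_ifs <;> simp
  leibniz' p q := by
    ext n
    simp only [LinearMap.coe_mk, AddHom.coe_mk, coeff_mk, smul_eq_mul, map_add, coeff_mul,
      map_sum, Derivation.leibniz, Finset.sum_add_distrib]
    congr 1
    exact Finset.Nat.sum_antidiagonal_swap (f := fun x => coeff x.1 q * δ (coeff x.2 p))

@[simp] theorem coeff_mapCoeffsPowerSeries (δ : Derivation R K K) (p : K⟦X⟧) (n : ℕ) :
    coeff n (δ.mapCoeffsPowerSeries p) = δ (coeff n p) := by
  simp [mapCoeffsPowerSeries]

end MapCoeffs

section WedgeEval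

variable {R B : Type*} [CommRing R] [CommRing B] [Algebra R B]

def wedgeEval (D₁ D₂ : Derivation R B B) (u v : B) : B := D₁ u * D₂ v - D₁ v * D₂ u

theorem wedgeEval_swap (D₁ D₂ : Derivation R B B) (u v : B) :
    wedgeEval D₁ D₂ v u = -wedgeEval D₁ D₂ u v := by
  unfold wedgeEval
  ring

end WedgeEval

end Derivation

theorem dvd_map_of_mem_span_range {R S F : Type*} [CommSemiring R] [CommSemiring S]
    [FunLike F R S] [RingHomClass F R S] (φ : F) {κ : Type*} {f : κ → R} {c : S}
    (hf : ∀ i, c ∣ φ (f i)) {a : R} (ha : a ∈ Ideal.span (Set.range f)) : c ∣ φ a := by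
  have hle : Ideal.span (Set.range f) ≤ (Ideal.span {c}).comap φ :=
    Ideal.span_le.mpr <| Set.range_subset_iff.mpr fun i => Ideal.mem_span_singleton.mpr (hf i)
  exact Ideal.mem_span_singleton.mp (hle ha)

theorem coeff_pred_wedgeEval_derivative_mapCoeffsPowerSeries {R K : Type*} [CommRing R]
    [CommRing K] [Algebra R K] (δ : Derivation R K K) {m : ℕ} (hm : 0 < m) {p : K⟦X⟧}
    (hp : X ^ m ∣ p) (q : K⟦X⟧) :
    coeff (m - 1) (((d⁄dX K).restrictScalars R).wedgeEval δ.mapCoeffsPowerSeries p q) =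
      m * coeff m p * δ (constantCoeff q) := by
  rw [X_pow_dvd_iff] at hp
  have hδp : X ^ m ∣ δ.mapCoeffsPowerSeries p :=
    X_pow_dvd_iff.mpr fun k hk => by simp [hp k hk]
  have h₂ : coeff (m - 1) (d⁄dX K q * δ.mapCoeffsPowerSeries p) = 0 :=
    X_pow_dvd_iff.mp (dvd_mul_of_dvd_right hδp _) _ (by omega)
  have h₁ : coeff (m - 1) (d⁄dX K p * δ.mapCoeffsPowerSeries q) =
      m * coeff m p * δ (constantCoeff q) := by
    obtain ⟨k, rfl⟩ : ∃ k, m = k + 1 := ⟨m - 1, by omega⟩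
    rw [coeff_mul, Finset.Nat.sum_antidiagonal_eq_sum_range_succ_mk, Finset.sum_range_succ,
      Finset.sum_eq_zero fun a ha => ?_]
    · simp only [add_tsub_cancel_right, coeff_derivative, tsub_self,
        Derivation.coeff_mapCoeffsPowerSeries, coeff_zero_eq_constantCoeff, zero_add,
        Nat.cast_add, Nat.cast_one]
      ring
    · rw [coeff_derivative, hp (a + 1) (by rw [Finset.mem_range] at ha; omega)]
      simp
  simp [Derivation.wedgeEval, h₁, h₂]

section EtaleCoordinates

variable {R A : Type*} [CommRing R] [CommRing A] [Algebra R A] {κ : Type*} [Fintype κ]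
  {x : κ → A} (b : Module.Basis κ A Ω[A⁄R]) (hb : ∀ i, b i = KaehlerDifferential.D R A (x i))
include hb

theorem Derivation.apply_eq_sum_basis_repr_smul {M : Type*} [AddCommGroup M] [Module A M]
    [Module R M] [IsScalarTower R A M] (δ : Derivation R A M) (a : A) :
    δ a = ∑ j, b.repr (KaehlerDifferential.D R A a) j • δ (x j) := by
  conv_lhs => rw [← δ.liftKaehlerDifferential_comp_D, ← b.sum_repr (KaehlerDifferential.D R A a)]
  simp only [map_sum, LinearMap.map_smul, hb, Derivation.liftKaehlerDifferential_comp_D]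

theorem Derivation.apply_algHom_eq_sum_basis_repr_mul {B : Type*} [CommRing B] [Algebra R B]
    (φ : A →ₐ[R] B) (δ : Derivation R B B) (a : A) :
    δ (φ a) = ∑ j, φ (b.repr (KaehlerDifferential.D R A a) j) * δ (φ (x j)) := by
  let _ : Algebra A B := φ.toAlgebra
  have : IsScalarTower R A B := .of_algebraMap_eq fun r => (φ.commutes r).symm
  have h := (δ.compAlgebraMap A).apply_eq_sum_basis_repr_smul b hb a
  simp only [Derivation.compAlgebraMap_apply, Algebra.smul_def] at h
  exact h

theorem Derivation.wedgeEval_algHom_eq_sum {B : Type*} [CommRing B] [Algebra R B]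
    (φ : A →ₐ[R] B) (D₁ D₂ : Derivation R B B) (a c : A) :
    wedgeEval D₁ D₂ (φ a) (φ c) =
      ∑ j, φ (b.repr (KaehlerDifferential.D R A a) j) * wedgeEval D₁ D₂ (φ (x j)) (φ c) := by
  rw [wedgeEval, D₁.apply_algHom_eq_sum_basis_repr_mul b hb φ a,
    D₂.apply_algHom_eq_sum_basis_repr_mul b hb φ a, Finset.sum_mul, Finset.mul_sum,
    ← Finset.sum_sub_distrib]
  exact Finset.sum_congr rfl fun j _ => by rw [wedgeEval]; ring

theorem Derivation.two_mul_sum_wedgeEval_eq {B : Type*} [CommRing B] [Algebra R B]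
    (φ : A →ₐ[R] B) (D₁ D₂ : Derivation R B B) (f : κ → A) :
    2 * ∑ i, wedgeEval D₁ D₂ (φ (f i)) (φ (x i)) =
      ∑ i, ∑ j, φ (b.repr (KaehlerDifferential.D R A (f i)) j -
        b.repr (KaehlerDifferential.D R A (f j)) i) * wedgeEval D₁ D₂ (φ (x j)) (φ (x i)) := by
  have hswap : ∑ i, ∑ j, φ (b.repr (KaehlerDifferential.D R A (f j)) i) *
        wedgeEval D₁ D₂ (φ (x j)) (φ (x i)) =
      -∑ i, ∑ j, φ (b.repr (KaehlerDifferential.D R A (f i)) j) *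
        wedgeEval D₁ D₂ (φ (x j)) (φ (x i)) := by
    rw [Finset.sum_comm, ← Finset.sum_neg_distrib]
    refine Finset.sum_congr rfl fun i _ => ?_
    rw [← Finset.sum_neg_distrib]
    exact Finset.sum_congr rfl fun j _ => by rw [wedgeEval_swap, mul_neg]
  simp only [map_sub, sub_mul, Finset.sum_sub_distrib, hswap,
    wedgeEval_algHom_eq_sum b hb φ D₁ D₂ (f _)]
  ring

theorem sum_coeff_smul_D_constantCoeff_eq_zero {K : Type*} [Field K] [CharZero K] [Algebra R K]
    {f : κ → A} (halmost : ∀ i j, b.repr (KaehlerDifferential.D R A (f i)) j -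
      b.repr (KaehlerDifferential.D R A (f j)) i ∈ Ideal.span (Set.range f))
    (γ : A →ₐ[R] K⟦X⟧) {m : ℕ} (hm : 0 < m) (hdiv : ∀ i, X ^ m ∣ γ (f i)) :
    ∑ i, coeff m (γ (f i)) • KaehlerDifferential.D R K (constantCoeff (γ (x i))) = 0 := by
  refine KaehlerDifferential.sum_smul_D_eq_zero_of_forall_derivation fun δ => ?_
  have key := congrArg (coeff (m - 1))
    (Derivation.two_mul_sum_wedgeEval_eq b hb γ ((d⁄dX K).restrictScalars R)
      δ.mapCoeffsPowerSeries f)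
  have hrhs : ∀ i j, coeff (m - 1) (γ (b.repr (KaehlerDifferential.D R A (f i)) j -
      b.repr (KaehlerDifferential.D R A (f j)) i) *
        ((d⁄dX K).restrictScalars R).wedgeEval δ.mapCoeffsPowerSeries (γ (x j)) (γ (x i))) = 0 :=
    fun i j => X_pow_dvd_iff.mp
      (dvd_mul_of_dvd_left (dvd_map_of_mem_span_range γ hdiv (halmost i j)) _) _ (by omega)
  simp only [two_mul, map_add, map_sum, hrhs, Finset.sum_const_zero,
    coeff_pred_wedgeEval_derivative_mapCoeffsPowerSeries δ hm (hdiv _), mul_assoc,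
    ← Finset.mul_sum] at key
  have h2m : (2 * m : K) ≠ 0 := mul_ne_zero two_ne_zero (Nat.cast_ne_zero.mpr hm.ne')
  refine (mul_eq_zero.mp ?_).resolve_left h2m
  linear_combination key

end EtaleCoordinates

end

/-- **Formula (form) of Lemma 4.8.**
Let `A` be a `ℂ`-algebra with étale coordinates `x₁, …, xₙ` (so the `d xᵢ` form a basis of
`Ω_{A/ℂ}`) and let `f₁, …, fₙ ∈ A` satisfy the almost-closedness condition
`∂ⱼ fᵢ − ∂ᵢ fⱼ ∈ (f₁, …, fₙ)`.  If `γ : A → K[[t]]` is a `ℂ`-algebra homomorphism to power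
series over a field `K` and `m > 0` is such that `t^m ∣ γ(fᵢ)` for all `i`, then
`Σᵢ d cᵢ^{(0)} ∧ d Fᵢ^{(m)} = 0` in `Λ² Ω_{K/ℂ}` (the degree-2 part `⋀[K]^2` of the exterior
algebra of `Ω_{K/ℂ}`, in which the wedge `ω ∧ η` of two 1-forms is the product
`ι ω * ι η`); here `Fᵢ^{(m)}` is the `t^m`-coefficient of `γ(fᵢ)` and `cᵢ^{(0)}` the
constant coefficient of `γ(xᵢ)`. -/
theorem almost_closed_one_form_lagrangian_identity
    (A : Type) [CommRing A] [Algebra ℂ A] (n : ℕ) (x : Fin n → A)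
    (b : Module.Basis (Fin n) A (KaehlerDifferential ℂ A))
    (hb : ∀ i, b i = KaehlerDifferential.D ℂ A (x i))
    (f : Fin n → A)
    (halmost : ∀ i j : Fin n,
      b.repr (KaehlerDifferential.D ℂ A (f i)) j - b.repr (KaehlerDifferential.D ℂ A (f j)) i
        ∈ Ideal.span (Set.range f))
    (K : Type) [Field K] [Algebra ℂ K]
    (γ : A →ₐ[ℂ] PowerSeries K) (m : ℕ) (hm : 0 < m)
    (hdiv : ∀ i : Fin n, ∀ p : ℕ, p < m → PowerSeries.coeff p (γ (f i)) = 0) :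
    ∑ i : Fin n,
        ι K (KaehlerDifferential.D ℂ K (PowerSeries.constantCoeff (γ (x i)))) *
          ι K (KaehlerDifferential.D ℂ K (PowerSeries.coeff m (γ (f i)))) =
      (0 : ExteriorAlgebra K (KaehlerDifferential ℂ K)) := by
  have : CharZero K := charZero_of_injective_algebraMap (algebraMap ℂ K).injective
  have hdvd : ∀ i, X ^ m ∣ γ (f i) := fun i => X_pow_dvd_iff.mpr (hdiv i)
  exact KaehlerDifferential.sum_ι_D_mul_ι_D_eq_zero_of_sum_smul_D_eq_zero
    (sum_coeff_smul_D_constantCoeff_eq_zero b hb halmost γ hm hdvd)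
end
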